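/- arXiv:math/9707216 — 2 statements merged into one kernel-verified Lean document; each statement's English description precedes it below -/
import Mathlib

section
/- Let P be an interval order with atom set A. Define a relation ≺ on A by a ≺ b iff a has a cover that is not greater than b. Then ≺ is a strict partial order on A (irreflexive, antisymmetric, and transitive). -/
/-!
Covers play no role beyond being strict upper bounds: if `a < c` and `b < d` with `a`, `b`
incomparable (e.g. distinct atoms), then `(2+2)`-freeness forces `a < d` or `b < c`.
Antisymmetry of `≺` applies this to the two witnessing covers; for transitivity, `c` lying
below the cover `c₁` of `a` that witnesses `a ≺ b` would make `b < c₂` and `c < c₁` a `(2+2)`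
against the witness `c₂` of `b ≺ c`.
-/

/-- A poset is `(2+2)`-free (an interval order) if it contains no induced subposet
isomorphic to the disjoint union of two 2-element chains. -/
def TwoPlusTwoFree (P : Type*) [Preorder P] : Prop :=
  ¬ ∃ a b c d : P, a < b ∧ c < d ∧
    ¬ a ≤ c ∧ ¬ c ≤ a ∧ ¬ a ≤ d ∧ ¬ d ≤ a ∧ ¬ b ≤ c ∧ ¬ c ≤ b ∧ ¬ b ≤ d ∧ ¬ d ≤ b

/-- The relation on atoms of a bounded poset: `a ≺ b` iff `a` has a cover that is not
greater than `b`. -/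
def AtomPrec {P : Type*} [PartialOrder P] (a b : P) : Prop :=
  ∃ c : P, a ⋖ c ∧ ¬ b < c

theorem IsAtom.not_le_of_ne {P : Type*} [PartialOrder P] [OrderBot P] {a b : P}
    (ha : IsAtom a) (hb : IsAtom b) (hab : a ≠ b) : ¬ a ≤ b :=
  mt (hb.le_iff_eq ha.ne_bot).1 hab

theorem TwoPlusTwoFree.lt_or_lt_of_not_le {P : Type*} [PartialOrder P] (h : TwoPlusTwoFree P)
    {a b c d : P} (hac : a < c) (hbd : b < d) (hab : ¬ a ≤ b) (hba : ¬ b ≤ a) :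
    a < d ∨ b < c := by
  by_contra hor
  obtain ⟨had, hbc⟩ := not_or.1 hor
  refine h ⟨a, c, b, d, hac, hbd, hab, hba, ?_, ?_, ?_, ?_, ?_, ?_⟩
  · exact fun had' => had (had'.lt_of_ne (by rintro rfl; exact hba hbd.le))
  · exact fun hda => hba (hbd.le.trans hda)
  · exact fun hcb => hab (hac.le.trans hcb)
  · exact fun hbc' => hbc (hbc'.lt_of_ne (by rintro rfl; exact hab hac.le))
  · exact fun hcd => had (hac.trans_le hcd)
  · exact fun hdc => hbc (hbd.trans_le hdc)

theorem stmt16_general {P : Type*} [PartialOrder P] [BoundedOrder P]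
    (h : TwoPlusTwoFree P) :
    (∀ a : P, IsAtom a → ¬ AtomPrec a a) ∧
    (∀ a b : P, IsAtom a → IsAtom b → AtomPrec a b → AtomPrec b a → a = b) ∧
    (∀ a b c : P, IsAtom a → IsAtom b → IsAtom c →
      AtomPrec a b → AtomPrec b c → AtomPrec a c) := by
  refine ⟨fun a _ ⟨c, hac, hac'⟩ => hac' hac.lt, ?_, ?_⟩
  · rintro a b ha hb ⟨c, hac, hbc⟩ ⟨d, hbd, had⟩
    by_contra hne
    exact (h.lt_or_lt_of_not_le hac.lt hbd.lt (ha.not_le_of_ne hb hne)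
      (hb.not_le_of_ne ha (Ne.symm hne))).elim had hbc
  · rintro a b c - hb hc ⟨c₁, hac₁, hbc₁⟩ ⟨c₂, hbc₂, hcc₂⟩
    refine ⟨c₁, hac₁, fun hcc₁ => ?_⟩
    have hne : b ≠ c := by
      rintro rfl
      exact hcc₂ hbc₂.lt
    exact (h.lt_or_lt_of_not_le hbc₂.lt hcc₁ (hb.not_le_of_ne hc hne)
      (hc.not_le_of_ne hb (Ne.symm hne))).elim hbc₁ hcc₂

/-- In an interval order, the relation `a ≺ b` iff `a` has a cover not greater than `b`
is a strict partial order on the set of atoms: irreflexive, antisymmetric and transitive. -/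
theorem stmt16 {P : Type*} [Fintype P] [PartialOrder P] [BoundedOrder P]
    (h : TwoPlusTwoFree P) :
    (∀ a : P, IsAtom a → ¬ AtomPrec a a) ∧
    (∀ a b : P, IsAtom a → IsAtom b → AtomPrec a b → AtomPrec b a → a = b) ∧
    (∀ a b c : P, IsAtom a → IsAtom b → IsAtom c →
      AtomPrec a b → AtomPrec b c → AtomPrec a c) :=
  stmt16_general h
end

section
/- For n ≥ 5, the simplicial complex M_n on vertex set {1,...,n} with facets {i, i+1, i+2} for i = 1,...,n (indices taken modulo n) is not shellable. -/
open Finset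

variable {V : Type*} [DecidableEq V]

/-- A (finite abstract) simplicial complex: a finset of finsets closed under subsets. -/
def IsComplex (K : Finset (Finset V)) : Prop :=
  ∀ F ∈ K, ∀ G ⊆ F, G ∈ K

/-- The facets (maximal faces) of a complex. -/
def facets (K : Finset (Finset V)) : Finset (Finset V) := by
  classical exact K.filter (fun F => ∀ G ∈ K, F ⊆ G → F = G)

/-- `L` is a shelling order of the facets of `K`: for each `i ≥ 2` (0-indexed `i ≥ 1`),
the intersection of the closed simplex on `F_i` with the union of the previous closed simplices
is pure of dimension `dim F_i - 1`: every face `G` of the intersection is contained in a face `H`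
of the intersection with `H.card = F_i.card - 1`. -/
def IsShelling (K : Finset (Finset V)) (L : List (Finset V)) : Prop :=
  L.Nodup ∧ L.toFinset = facets K ∧
  ∀ i : Fin L.length, i.1 ≠ 0 → ∀ G ⊆ L.get i,
    (∃ j : Fin L.length, j < i ∧ G ⊆ L.get j) →
    ∃ H, G ⊆ H ∧ H ⊆ L.get i ∧ H.card + 1 = (L.get i).card ∧
      ∃ j : Fin L.length, j < i ∧ H ⊆ L.get j

/-- A complex is shellable if it admits a shelling order of its facets. -/
def Shellable (K : Finset (Finset V)) : Prop := ∃ L, IsShelling K L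

/-- The subcomplex of `K` induced by a vertex subset `U`. -/
def inducedSub (K : Finset (Finset V)) (U : Finset V) : Finset (Finset V) :=
  K.filter (fun F => F ⊆ U)

/-- The vertex set of a complex. -/
def verts (K : Finset (Finset V)) : Finset V := K.sup id

/-- The link of a vertex `v` in `K`. -/
def link (K : Finset (Finset V)) (v : V) : Finset (Finset V) :=
  K.filter (fun F => v ∉ F ∧ insert v F ∈ K)

/-- A complex is pure if all of its facets have the same dimension. -/
def IsPure (K : Finset (Finset V)) : Prop :=
  ∀ F ∈ facets K, ∀ G ∈ facets K, F.card = G.card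

/-- The complex `M n` on vertex set `ZMod n` with facets `{i, i+1, i+2}` (indices mod `n`). -/
def Mn (n : ℕ) [NeZero n] : Finset (Finset (ZMod n)) :=
  Finset.univ.biUnion (fun i : ZMod n => ({i, i + 1, i + 2} : Finset (ZMod n)).powerset)


section Aux

variable {n : ℕ} [NeZero n]

/-- The `i`-th facet of `Mn n`. -/
private def Tf (n : ℕ) [NeZero n] (i : ZMod n) : Finset (ZMod n) := {i, i+1, i+2}

private lemma czero (hn : 5 ≤ n) {c : ℕ} (h0 : 0 < c) (h1 : c < 5) : (c : ZMod n) ≠ 0 := by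
  intro h
  rw [ZMod.natCast_eq_zero_iff] at h
  have := Nat.le_of_dvd h0 h
  omega

private lemma c1 (hn : 5 ≤ n) : (1 : ZMod n) ≠ 0 := by
  have := czero (n := n) hn (c := 1) (by norm_num) (by norm_num); simpa using this
private lemma c2 (hn : 5 ≤ n) : (2 : ZMod n) ≠ 0 := by
  have := czero (n := n) hn (c := 2) (by norm_num) (by norm_num); simpa using this
private lemma c3 (hn : 5 ≤ n) : (3 : ZMod n) ≠ 0 := by
  have := czero (n := n) hn (c := 3) (by norm_num) (by norm_num); simpa using this
private lemma c4 (hn : 5 ≤ n) : (4 : ZMod n) ≠ 0 := by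
  have := czero (n := n) hn (c := 4) (by norm_num) (by norm_num); simpa using this

private lemma mem_Tf {x k : ZMod n} : x ∈ Tf n k ↔ x = k ∨ x = k + 1 ∨ x = k + 2 := by
  simp [Tf]

/-- If an edge `{i, i+1}` lies in `Tf k` then `k = i` or `i = k+1`. -/
private lemma key1 (hn : 5 ≤ n) {i k : ZMod n} (h1 : i ∈ Tf n k) (h2 : i + 1 ∈ Tf n k) :
    k = i ∨ i = k + 1 := by
  rw [mem_Tf] at h1 h2
  rcases h1 with h1 | h1 | h1
  · exact Or.inl h1.symm
  · exact Or.inr h1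
  · rcases h2 with h2 | h2 | h2
    · exact absurd (by linear_combination h2 - h1 : (3 : ZMod n) = 0) (c3 hn)
    · exact absurd (by linear_combination h2 - h1 : (2 : ZMod n) = 0) (c2 hn)
    · exact absurd (by linear_combination h2 - h1 : (1 : ZMod n) = 0) (c1 hn)

/-- If `{i, i+2}` lies in `Tf k` then `k = i`. -/
private lemma key2 (hn : 5 ≤ n) {i k : ZMod n} (h1 : i ∈ Tf n k) (h2 : i + 2 ∈ Tf n k) :
    k = i := by
  rw [mem_Tf] at h1 h2
  rcases h1 with h1 | h1 | h1
  · exact h1.symm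
  · rcases h2 with h2 | h2 | h2
    · exact absurd (by linear_combination h2 - h1 : (3 : ZMod n) = 0) (c3 hn)
    · exact absurd (by linear_combination h2 - h1 : (2 : ZMod n) = 0) (c2 hn)
    · exact absurd (by linear_combination h2 - h1 : (1 : ZMod n) = 0) (c1 hn)
  · rcases h2 with h2 | h2 | h2
    · exact absurd (by linear_combination h2 - h1 : (4 : ZMod n) = 0) (c4 hn)
    · exact absurd (by linear_combination h2 - h1 : (3 : ZMod n) = 0) (c3 hn)
    · exact absurd (by linear_combination h2 - h1 : (2 : ZMod n) = 0) (c2 hn)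

private lemma Tf_subset (hn : 5 ≤ n) {i k : ZMod n} (h : Tf n i ⊆ Tf n k) : k = i :=
  key2 hn (h (by rw [mem_Tf]; tauto)) (h (by rw [mem_Tf]; tauto))

private lemma card_Tf (hn : 5 ≤ n) (i : ZMod n) : (Tf n i).card = 3 := by
  have h1 : i ≠ i + 1 := fun h => c1 hn (by linear_combination -h)
  have h2 : i ≠ i + 2 := fun h => c2 hn (by linear_combination -h)
  have h3 : i + 1 ≠ i + 2 := fun h => c1 hn (by linear_combination -h)
  rw [Tf, Finset.card_insert_of_notMem (by simp [h1, h2]),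
    Finset.card_insert_of_notMem (by simp [h3]), Finset.card_singleton]

private lemma mem_Mn {F : Finset (ZMod n)} : F ∈ Mn n ↔ ∃ i, F ⊆ Tf n i := by
  simp [Mn, Tf, Finset.mem_biUnion]

private lemma facets_Mn (hn : 5 ≤ n) :
    facets (Mn n) = Finset.univ.image (Tf n) := by
  ext F
  simp only [facets, Finset.mem_filter, Finset.mem_image, Finset.mem_univ, true_and]
  constructor
  · rintro ⟨hF, hmax⟩
    obtain ⟨i, hi⟩ := mem_Mn.mp hF
    exact ⟨i, (hmax _ (mem_Mn.mpr ⟨i, le_refl _⟩) hi).symm⟩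
  · rintro ⟨i, rfl⟩
    refine ⟨mem_Mn.mpr ⟨i, le_refl _⟩, ?_⟩
    intro G hG hsub
    obtain ⟨k, hk⟩ := mem_Mn.mp hG
    have : k = i := Tf_subset hn (hsub.trans hk)
    subst this
    exact Finset.Subset.antisymm hsub hk

end Aux

/-- For `n ≥ 5`, the complex `M n` with facets `{i, i+1, i+2}` for `i` mod `n`
(a triangulated cylinder or Möbius strip) is not shellable. -/

theorem stmt19 (n : ℕ) [NeZero n] (hn : 5 ≤ n) : ¬ Shellable (Mn n) := by
  rintro ⟨L, hnd, hset, hshell⟩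
  have hfac := facets_Mn (n := n) hn
  -- positions of facets
  have hex : ∀ i : ZMod n, ∃ k : Fin L.length, L.get k = Tf n i := by
    intro i
    have : Tf n i ∈ L := by
      rw [← List.mem_toFinset, hset, hfac]
      exact Finset.mem_image_of_mem _ (Finset.mem_univ i)
    exact List.mem_iff_get.mp this
  choose p hp using hex
  have pinj : ∀ {u v : ZMod n}, p u = p v → u = v := by
    intro u v h
    have hT : Tf n u = Tf n v := by rw [← hp u, ← hp v, h]
    exact Tf_subset hn hT.ge
  -- get-equality determines the position
  have hget : ∀ (j : Fin L.length) (k : ZMod n), L.get j = Tf n k → j = p k := by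
    intro j k h
    exact hnd.get_inj_iff.mp (by rw [h, hp])
  -- a facet with maximal position
  obtain ⟨a, -, ha⟩ := Finset.exists_max_image (Finset.univ : Finset (ZMod n)) p
    ⟨0, Finset.mem_univ 0⟩
  set j : ZMod n := a - 1 with hjdef
  have haj : j + 1 = a := sub_add_cancel a 1
  have hja : p j < p a := by
    refine lt_of_le_of_ne (ha j (Finset.mem_univ j)) (fun h => c1 hn ?_)
    have := pinj h
    linear_combination haj - this
  have hj2a : p (j + 2) < p a := by
    refine lt_of_le_of_ne (ha (j + 2) (Finset.mem_univ _)) (fun h => c1 hn ?_)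
    have := pinj h
    linear_combination this - haj
  have hne : p j ≠ p (j + 2) := fun h => c2 hn (by linear_combination -(pinj h))
  have hm1 : (j + 2 : ZMod n) ∈ Tf n j := by rw [mem_Tf]; tauto
  have hm2 : (j + 2 : ZMod n) ∈ Tf n (j + 2) := by rw [mem_Tf]; tauto
  rcases lt_or_gt_of_ne hne with hlt | hlt
  · -- p j < p (j+2) < p a : shelling condition at Tf (j+2) fails
    have hpos : (p (j + 2)).1 ≠ 0 := by
      have : (p j).1 < (p (j + 2)).1 := hlt
      omega
    obtain ⟨H, hGH, hHT, hcard, j'', hj''lt, hj''sub⟩ :=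
      hshell (p (j + 2)) hpos {j + 2}
        (by rw [hp]; exact Finset.singleton_subset_iff.mpr hm2)
        ⟨p j, hlt, by rw [hp]; exact Finset.singleton_subset_iff.mpr hm1⟩
    rw [hp] at hHT
    rw [hp, card_Tf hn] at hcard
    obtain ⟨x, hxH, hxne⟩ := Finset.exists_mem_ne (s := H) (by omega) (j + 2)
    obtain ⟨k, -, hk⟩ := Finset.mem_image.mp (by
      rw [← hfac, ← hset]
      exact List.mem_toFinset.mpr (L.get_mem _) : L.get j'' ∈ Finset.univ.image (Tf n))
    have hj''p : j'' = p k := hget j'' k hk.symm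
    have hjin : (j + 2 : ZMod n) ∈ Tf n k := by
      rw [hk]; exact hj''sub (hGH (Finset.mem_singleton_self _))
    have hxin : x ∈ Tf n k := by rw [hk]; exact hj''sub hxH
    have hxT := hHT hxH
    rw [mem_Tf] at hxT
    rcases hxT with h | h | h
    · exact hxne h
    · -- x = j + 3 : the edge {j+2, j+3}
      rcases key1 hn hjin (h ▸ hxin) with hkk | hkk
      · subst hkk
        rw [hj''p] at hj''lt
        exact absurd hj''lt (lt_irrefl _)
      · -- k = j + 1 = a
        have hka : k = a := by linear_combination haj - hkk
        subst hka
        rw [hj''p] at hj''lt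
        exact absurd (hj''lt.trans hj2a) (lt_irrefl _)
    · -- x = j + 4 : the edge {j+2, j+4}
      have hkk : k = j + 2 := key2 hn hjin (by
        have hx4 : x = (j + 2) + 2 := by linear_combination h
        exact hx4 ▸ hxin)
      subst hkk
      rw [hj''p] at hj''lt
      exact absurd hj''lt (lt_irrefl _)
  · -- p (j+2) < p j < p a : shelling condition at Tf j fails
    have hpos : (p j).1 ≠ 0 := by
      have : (p (j + 2)).1 < (p j).1 := hlt
      omega
    obtain ⟨H, hGH, hHT, hcard, j'', hj''lt, hj''sub⟩ :=
      hshell (p j) hpos {j + 2}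
        (by rw [hp]; exact Finset.singleton_subset_iff.mpr hm1)
        ⟨p (j + 2), hlt, by rw [hp]; exact Finset.singleton_subset_iff.mpr hm2⟩
    rw [hp] at hHT
    rw [hp, card_Tf hn] at hcard
    obtain ⟨x, hxH, hxne⟩ := Finset.exists_mem_ne (s := H) (by omega) (j + 2)
    obtain ⟨k, -, hk⟩ := Finset.mem_image.mp (by
      rw [← hfac, ← hset]
      exact List.mem_toFinset.mpr (L.get_mem _) : L.get j'' ∈ Finset.univ.image (Tf n))
    have hj''p : j'' = p k := hget j'' k hk.symm
    have hjin : (j + 2 : ZMod n) ∈ Tf n k := by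
      rw [hk]; exact hj''sub (hGH (Finset.mem_singleton_self _))
    have hxin : x ∈ Tf n k := by rw [hk]; exact hj''sub hxH
    have hxT := hHT hxH
    rw [mem_Tf] at hxT
    rcases hxT with h | h | h
    · -- x = j : the edge {j, j+2}
      have hkk : k = j := key2 hn (h ▸ hxin) hjin
      subst hkk
      rw [hj''p] at hj''lt
      exact absurd hj''lt (lt_irrefl _)
    · -- x = j + 1 : the edge {j+1, j+2}
      have hjin' : (j + 1) + 1 ∈ Tf n k := by
        have hq : (j + 2 : ZMod n) = (j + 1) + 1 := by ring
        exact hq ▸ hjin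
      rcases key1 hn (h ▸ hxin) hjin' with hkk | hkk
      · -- k = j + 1 = a
        have hka : k = a := by rw [hkk, haj]
        subst hka
        rw [hj''p] at hj''lt
        exact absurd (hj''lt.trans hja) (lt_irrefl _)
      · -- k = j
        have hkk2 : k = j := by linear_combination -hkk
        subst hkk2
        rw [hj''p] at hj''lt
        exact absurd hj''lt (lt_irrefl _)
    · exact hxne h
end
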